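/- Let M be a symmetric 3×3 positive semi-definite matrix with distinct eigenvalues λ1 > λ2 > λ3 ≥ 0, M = U Λ U^T, and let C̃_*i = U D_i U^T for i ∈ {1,2,3}, with D_i as in the equilibria lemma. Then the matrix A_i = C̃_*i (tr(M) I - M) has at least one negative eigenvalue. -/
import Mathlib


open Matrix

/-- The three non-identity equilibrium "sign" matrices D₁, D₂, D₃. -/
noncomputable def Dmat : Fin 3 → Matrix (Fin 3) (Fin 3) ℝ
  | 0 => diagonal ![1, -1, -1]
  | 1 => diagonal ![-1, 1, -1]
  | 2 => diagonal ![-1, -1, 1]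

theorem stmt_14 (M U : Matrix (Fin 3) (Fin 3) ℝ) (d : Fin 3 → ℝ)
    (hM : Mᵀ = M)
    (hU : U * Uᵀ = 1)
    (hdecomp : M = U * diagonal d * Uᵀ)
    (hord : d 0 > d 1 ∧ d 1 > d 2 ∧ d 2 ≥ 0)
    (i : Fin 3)
    (Cstar A : Matrix (Fin 3) (Fin 3) ℝ)
    (hCstar : Cstar = U * Dmat i * Uᵀ)
    (hA : A = Cstar * (M.trace • (1 : Matrix (Fin 3) (Fin 3) ℝ) - M)) :
    ∃ (μ : ℝ) (w : Fin 3 → ℝ), w ≠ 0 ∧ A.mulVec w = μ • w ∧ μ < 0 := by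
  obtain ⟨h01, h12, h2⟩ := hord
  have hUtU : Uᵀ * U = 1 := mul_eq_one_comm.mp hU
  set t := M.trace with ht
  have htr : t = d 0 + d 1 + d 2 := by
    rw [ht, hdecomp, Matrix.trace_mul_cycle, hUtU, Matrix.one_mul, Matrix.trace_fin_three]
    simp [Matrix.diagonal]
  have hε : Dmat i = diagonal (fun k => if k = i then (1:ℝ) else -1) := by
    fin_cases i <;> · ext a b; fin_cases a <;> fin_cases b <;>
      simp [Dmat, Matrix.diagonal_apply]
  have hdiag : t • (1 : Matrix (Fin 3) (Fin 3) ℝ) - diagonal d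
      = diagonal (fun k => t - d k) := by
    ext a b
    by_cases h : a = b <;> simp [Matrix.diagonal_apply, Matrix.one_apply, h]
  have hAU : A * U = U * diagonal (fun k => (if k = i then (1:ℝ) else -1) * (t - d k)) := by
    rw [hA, hCstar, hε]
    have hMU : M * U = U * diagonal d := by
      rw [hdecomp, Matrix.mul_assoc, Matrix.mul_assoc, hUtU, Matrix.mul_one]
    calc U * diagonal (fun k => if k = i then (1:ℝ) else -1) * Uᵀ *
          (t • (1 : Matrix (Fin 3) (Fin 3) ℝ) - M) * U
        = U * diagonal (fun k => if k = i then (1:ℝ) else -1) *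
            (Uᵀ * ((t • (1 : Matrix (Fin 3) (Fin 3) ℝ) - M) * U)) := by
          rw [Matrix.mul_assoc, Matrix.mul_assoc]
      _ = U * diagonal (fun k => if k = i then (1:ℝ) else -1) *
            diagonal (fun k => t - d k) := by
          rw [Matrix.sub_mul, Matrix.smul_mul, Matrix.one_mul, hMU, Matrix.mul_sub,
            Matrix.mul_smul, hUtU, ← Matrix.mul_assoc, hUtU, Matrix.one_mul, hdiag]
      _ = U * diagonal (fun k => (if k = i then (1:ℝ) else -1) * (t - d k)) := by
          rw [Matrix.mul_assoc, Matrix.diagonal_mul_diagonal]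
  -- choose column j
  obtain ⟨j, hji, hpos⟩ : ∃ j : Fin 3, j ≠ i ∧ t - d j > 0 := by
    fin_cases i
    · exact ⟨1, by decide, by linarith⟩
    · exact ⟨0, by decide, by linarith⟩
    · exact ⟨0, by decide, by linarith⟩
  refine ⟨-(t - d j), U.mulVec (Pi.single j 1 : Fin 3 → ℝ), ?_, ?_, by linarith⟩
  · intro h
    have h2' : Uᵀ.mulVec (U.mulVec (Pi.single j 1 : Fin 3 → ℝ)) = Uᵀ.mulVec 0 := by rw [h]
    rw [Matrix.mulVec_mulVec, hUtU, Matrix.one_mulVec, Matrix.mulVec_zero] at h2'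
    have := congrFun h2' j
    simp at this
  · rw [Matrix.mulVec_mulVec, hAU, ← Matrix.mulVec_mulVec]
    have : (diagonal (fun k => (if k = i then (1:ℝ) else -1) * (t - d k))).mulVec
        (Pi.single j 1 : Fin 3 → ℝ) = (-(t - d j)) • (Pi.single j 1 : Fin 3 → ℝ) := by
      funext a
      by_cases h : a = j <;>
        simp [Matrix.mulVec_single, Matrix.diagonal_apply, h, hji, Pi.single_apply]
    rw [this, Matrix.mulVec_smul]
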